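/- Let C_ω = sup_{(i,j)∈E} √ω_{ij}. For ρ ∈ P(G) and skew-symmetric v, ‖div_ρ(v)‖_{ℓ¹} ≤ √2 n C_ω ‖v‖_ρ. Consequently, for an action-minimizing curve σ from ρ⁰ to ρ¹ with velocity v, ‖σ̇(t)‖_{ℓ∞} ≤ √2 n C_ω 𝒲(ρ⁰, ρ¹). -/

import Mathlib

open Finset MeasureTheory

/-- The probability simplex `P(G)`. -/
def IsProb {n : ℕ} (ρ : Fin n → ℝ) : Prop := (∀ i, 0 ≤ ρ i) ∧ ∑ i, ρ i = 1

/-- Skew-symmetric matrices `𝕊^{n×n}`. -/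
def Skew {n : ℕ} (v : Fin n → Fin n → ℝ) : Prop := ∀ i j, v i j = - v j i

/-- The weighted inner product `(v,w)_ρ = (1/2) ∑_{(i,j)∈E} g(ρ_i,ρ_j) v_{ij} w_{ij}`. -/
noncomputable def gInner {n : ℕ} (ω : Fin n → Fin n → ℝ) (g : ℝ → ℝ → ℝ)
    (ρ : Fin n → ℝ) (v w : Fin n → Fin n → ℝ) : ℝ :=
  (1/2) * ∑ i, ∑ j, (if ω i j ≠ 0 then g (ρ i) (ρ j) * v i j * w i j else 0)

/-- The graph gradient `(∇_G φ)_{ij} = √ω_{ij} (φ_i - φ_j)`. -/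
noncomputable def gradG {n : ℕ} (ω : Fin n → Fin n → ℝ) (φ : Fin n → ℝ) :
    Fin n → Fin n → ℝ :=
  fun i j => Real.sqrt (ω i j) * (φ i - φ j)

/-- The graph divergence `⟨div_ρ(v)⟩_i = ∑_{j∈N(i)} √ω_{ij} g(ρ_i,ρ_j) v_{ji}`. -/
noncomputable def gdiv {n : ℕ} (ω : Fin n → Fin n → ℝ) (g : ℝ → ℝ → ℝ)
    (ρ : Fin n → ℝ) (v : Fin n → Fin n → ℝ) : Fin n → ℝ :=
  fun i => ∑ j, Real.sqrt (ω i j) * g (ρ i) (ρ j) * v j i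

/-- The euclidean pairing on `ℝ^n`. -/
def dotl2 {n : ℕ} (a b : Fin n → ℝ) : ℝ := ∑ i, a i * b i

/-- The squared graph Wasserstein distance `𝒲²(ρ⁰, ρ¹)` (velocity formulation). -/
noncomputable def W2sqV {n : ℕ} (ω : Fin n → Fin n → ℝ) (g : ℝ → ℝ → ℝ)
    (ρ0 ρ1 : Fin n → ℝ) : ENNReal :=
  ⨅ (σ : ℝ → Fin n → ℝ) (v : ℝ → Fin n → Fin n → ℝ) (_ : Continuous σ)
    (_ : ∀ t ∈ Set.Icc (0:ℝ) 1, IsProb (σ t)) (_ : ∀ t, Skew (v t))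
    (_ : ∀ t ∈ Set.Icc (0:ℝ) 1,
        HasDerivAt σ (fun i => -(gdiv ω g (σ t) (v t) i)) t)
    (_ : σ 0 = ρ0) (_ : σ 1 = ρ1),
    ∫⁻ t in Set.Icc (0:ℝ) 1, ENNReal.ofReal (gInner ω g (σ t) (v t) (v t))

/-
On each edge write `√ω g |v| = (√ω √g) (√g |v|)` and apply Cauchy–Schwarz. Since
`g(ρᵢ, ρⱼ) ≤ ρᵢ + ρⱼ`, the squares of the first factors sum to at most
`C_ω² ∑_{i ≠ j} (ρᵢ + ρⱼ) = 2 (n - 1) C_ω² ≤ n² C_ω²`; those of the second factors sum to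
`2 ‖v‖²_ρ`. On a minimizing curve each coordinate of `σ̇ = -div_σ(v)` is bounded by the
`ℓ¹` norm, and the action at each time is at most `𝒲²`.
-/

lemma Finset.sum_offDiag_add {ι : Type*} [DecidableEq ι] (s : Finset ι) (f : ι → ℝ) :
    ∑ p ∈ s.offDiag, (f p.1 + f p.2) = 2 * (#s - 1) * ∑ i ∈ s, f i := by
  have hsplit := sum_union (disjoint_diag_offDiag s) (f := fun p => f p.1 + f p.2)
  rw [diag_union_offDiag, sum_diag, sum_product] at hsplit
  simp only [sum_add_distrib, sum_const, nsmul_eq_mul, ← mul_sum] at hsplit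
  rw [sum_add_distrib]
  linarith

lemma Skew.apply_self {n : ℕ} {v : Fin n → Fin n → ℝ} (hv : Skew v) (i : Fin n) : v i i = 0 := by
  linarith [hv i i]

lemma Skew.abs_apply_comm {n : ℕ} {v : Fin n → Fin n → ℝ} (hv : Skew v) (i j : Fin n) :
    |v j i| = |v i j| := by
  rw [hv j i, abs_neg]

lemma IsProb.nonempty {n : ℕ} {ρ : Fin n → ℝ} (hρ : IsProb ρ) : Nonempty (Fin n) := by
  by_contra h
  rw [not_nonempty_iff] at h
  simpa using hρ.2

lemma IsProb.nonneg_of_sqrt_le {n : ℕ} {ρ : Fin n → ℝ} {ω : Fin n → Fin n → ℝ} {C : ℝ}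
    (hρ : IsProb ρ) (hC : ∀ i j, √(ω i j) ≤ C) : 0 ≤ C := by
  obtain ⟨i⟩ := hρ.nonempty
  exact (Real.sqrt_nonneg _).trans (hC i i)

-- The diagonal is left out of the edge set: this makes the weights sum to `2 (n - 1) ≤ n²`
-- instead of `2 n`, which would exceed `n²` for `n = 1`.

noncomputable def edges {n : ℕ} (ω : Fin n → Fin n → ℝ) : Finset (Fin n × Fin n) :=
  univ.offDiag.filter fun p => ω p.1 p.2 ≠ 0

section

variable {n : ℕ} {ω : Fin n → Fin n → ℝ} {g : ℝ → ℝ → ℝ} {ρ : Fin n → ℝ}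
  {v : Fin n → Fin n → ℝ}

lemma sum_abs_gdiv_le_sum_edges (hv : Skew v) (hg : ∀ s t, 0 ≤ g s t) :
    ∑ i, |gdiv ω g ρ v i|
      ≤ ∑ p ∈ edges ω, √(ω p.1 p.2) * g (ρ p.1) (ρ p.2) * |v p.1 p.2| := by
  have hterm : ∀ i j, |√(ω i j) * g (ρ i) (ρ j) * v j i|
      = √(ω i j) * g (ρ i) (ρ j) * |v i j| := fun i j => by
    rw [abs_mul, abs_mul, abs_of_nonneg (Real.sqrt_nonneg _), abs_of_nonneg (hg _ _),
      hv.abs_apply_comm]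
  calc ∑ i, |gdiv ω g ρ v i|
      ≤ ∑ i, ∑ j, √(ω i j) * g (ρ i) (ρ j) * |v i j| :=
        sum_le_sum fun i _ => (abs_sum_le_sum_abs _ _).trans_eq (by simp only [hterm])
    _ = ∑ p ∈ edges ω, √(ω p.1 p.2) * g (ρ p.1) (ρ p.2) * |v p.1 p.2| := by
        rw [← Fintype.sum_prod_type']
        refine (sum_subset (subset_univ _) ?_).symm
        intro p _ hp
        by_cases hdiag : p.1 = p.2
        · rw [hdiag, hv.apply_self, abs_zero, mul_zero]
        · have hω : ω p.1 p.2 = 0 := by simpa [edges, hdiag] using hp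
          rw [hω, Real.sqrt_zero, zero_mul, zero_mul]

lemma sum_edges_weight_le (hρ : IsProb ρ) (hg : ∀ s t, 0 ≤ g s t)
    (hgsum : ∀ s t : ℝ, 0 ≤ s → 0 ≤ t → g s t ≤ s + t) {Cω : ℝ}
    (hC : ∀ i j, √(ω i j) ≤ Cω) :
    ∑ p ∈ edges ω, (√(ω p.1 p.2) * √(g (ρ p.1) (ρ p.2))) ^ 2 ≤ Cω ^ 2 * (2 * (n - 1)) := by
  have hterm : ∀ p : Fin n × Fin n,
      (√(ω p.1 p.2) * √(g (ρ p.1) (ρ p.2))) ^ 2 ≤ Cω ^ 2 * (ρ p.1 + ρ p.2) := fun p => by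
    rw [mul_pow, Real.sq_sqrt (hg _ _)]
    exact mul_le_mul (pow_le_pow_left₀ (Real.sqrt_nonneg _) (hC _ _) 2)
      (hgsum _ _ (hρ.1 _) (hρ.1 _)) (hg _ _) (sq_nonneg _)
  calc ∑ p ∈ edges ω, (√(ω p.1 p.2) * √(g (ρ p.1) (ρ p.2))) ^ 2
      ≤ ∑ p ∈ edges ω, Cω ^ 2 * (ρ p.1 + ρ p.2) := sum_le_sum fun p _ => hterm p
    _ ≤ ∑ p ∈ univ.offDiag, Cω ^ 2 * (ρ p.1 + ρ p.2) :=
        sum_le_sum_of_subset_of_nonneg (filter_subset _ _) fun p _ _ =>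
          mul_nonneg (sq_nonneg _) (add_nonneg (hρ.1 _) (hρ.1 _))
    _ = Cω ^ 2 * (2 * (n - 1)) := by
        rw [← mul_sum, sum_offDiag_add, hρ.2, card_univ, Fintype.card_fin, mul_one]

lemma sum_edges_flux_le (hg : ∀ s t, 0 ≤ g s t) :
    ∑ p ∈ edges ω, (√(g (ρ p.1) (ρ p.2)) * |v p.1 p.2|) ^ 2 ≤ 2 * gInner ω g ρ v v := by
  have hedges : edges ω ⊆ univ.filter fun p : Fin n × Fin n => ω p.1 p.2 ≠ 0 :=
    filter_subset_filter _ (subset_univ _)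
  calc ∑ p ∈ edges ω, (√(g (ρ p.1) (ρ p.2)) * |v p.1 p.2|) ^ 2
      ≤ ∑ p ∈ univ.filter fun p : Fin n × Fin n => ω p.1 p.2 ≠ 0,
          g (ρ p.1) (ρ p.2) * v p.1 p.2 * v p.1 p.2 := by
        refine sum_le_sum_of_subset_of_nonneg hedges (fun p _ _ => ?_) |>.trans_eq' ?_
        · rw [mul_assoc]; exact mul_nonneg (hg _ _) (mul_self_nonneg _)
        · refine sum_congr rfl fun p _ => ?_
          rw [mul_pow, Real.sq_sqrt (hg _ _), sq_abs, sq, mul_assoc]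
    _ = 2 * gInner ω g ρ v v := by
        rw [sum_filter, Fintype.sum_prod_type, gInner]
        ring

theorem sum_abs_gdiv_le (hρ : IsProb ρ) (hv : Skew v) (hg : ∀ s t, 0 ≤ g s t)
    (hgsum : ∀ s t : ℝ, 0 ≤ s → 0 ≤ t → g s t ≤ s + t) {Cω : ℝ}
    (hC : ∀ i j, √(ω i j) ≤ Cω) :
    ∑ i, |gdiv ω g ρ v i| ≤ √2 * n * Cω * √(gInner ω g ρ v v) := by
  have hC0 : 0 ≤ Cω := hρ.nonneg_of_sqrt_le hC
  have hweight : √(∑ p ∈ edges ω, (√(ω p.1 p.2) * √(g (ρ p.1) (ρ p.2))) ^ 2) ≤ Cω * n := by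
    refine Real.sqrt_le_iff.2 ⟨by positivity, (sum_edges_weight_le hρ hg hgsum hC).trans ?_⟩
    nlinarith [sq_nonneg ((n : ℝ) - 1), sq_nonneg Cω]
  have hflux : √(∑ p ∈ edges ω, (√(g (ρ p.1) (ρ p.2)) * |v p.1 p.2|) ^ 2)
      ≤ √2 * √(gInner ω g ρ v v) := by
    rw [← Real.sqrt_mul zero_le_two]
    exact Real.sqrt_le_sqrt (sum_edges_flux_le hg)
  calc ∑ i, |gdiv ω g ρ v i|
      ≤ ∑ p ∈ edges ω, √(ω p.1 p.2) * √(g (ρ p.1) (ρ p.2))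
          * (√(g (ρ p.1) (ρ p.2)) * |v p.1 p.2|) := by
        refine (sum_abs_gdiv_le_sum_edges hv hg).trans_eq (sum_congr rfl fun p _ => ?_)
        linear_combination -(√(ω p.1 p.2) * |v p.1 p.2|) * Real.mul_self_sqrt (hg (ρ p.1) (ρ p.2))
    _ ≤ (Cω * n) * (√2 * √(gInner ω g ρ v v)) :=
        (Real.sum_mul_le_sqrt_mul_sqrt _ _ _).trans
          (mul_le_mul hweight hflux (Real.sqrt_nonneg _) (by positivity))
    _ = √2 * n * Cω * √(gInner ω g ρ v v) := by ring

end

theorem stmt7_general {n : ℕ} (ω : Fin n → Fin n → ℝ) (g : ℝ → ℝ → ℝ)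
    (hgnonneg : ∀ s t, 0 ≤ g s t)
    (hgsum : ∀ s t : ℝ, 0 ≤ s → 0 ≤ t → g s t ≤ s + t)
    (Cω : ℝ) (hC : ∀ i j, Real.sqrt (ω i j) ≤ Cω) :
    (∀ (ρ : Fin n → ℝ) (v : Fin n → Fin n → ℝ), IsProb ρ → Skew v →
      ∑ i, |gdiv ω g ρ v i|
        ≤ Real.sqrt 2 * n * Cω * Real.sqrt (gInner ω g ρ v v)) ∧
    (∀ (ρ0 ρ1 : Fin n → ℝ) (σ : ℝ → Fin n → ℝ) (v : ℝ → Fin n → Fin n → ℝ),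
      IsProb ρ0 → IsProb ρ1 → W2sqV ω g ρ0 ρ1 ≠ ⊤ →
      (∀ t ∈ Set.Icc (0:ℝ) 1, IsProb (σ t)) → (∀ t, Skew (v t)) →
      (∀ t ∈ Set.Icc (0:ℝ) 1,
        HasDerivAt σ (fun i => -(gdiv ω g (σ t) (v t) i)) t) →
      σ 0 = ρ0 → σ 1 = ρ1 →
      (∀ t ∈ Set.Icc (0:ℝ) 1,
        ENNReal.ofReal (gInner ω g (σ t) (v t) (v t)) ≤ W2sqV ω g ρ0 ρ1) →
      ∀ t ∈ Set.Icc (0:ℝ) 1, ∀ i,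
        |gdiv ω g (σ t) (v t) i|
          ≤ Real.sqrt 2 * n * Cω * Real.sqrt (W2sqV ω g ρ0 ρ1).toReal) := by
  refine ⟨fun ρ v hρ hv => sum_abs_gdiv_le hρ hv hgnonneg hgsum hC, ?_⟩
  intro ρ0 ρ1 σ v _ _ hW hσ hv _ _ _ hmin t ht i
  have hC0 : 0 ≤ Cω := (hσ t ht).nonneg_of_sqrt_le hC
  have hI : gInner ω g (σ t) (v t) (v t) ≤ (W2sqV ω g ρ0 ρ1).toReal :=
    (ENNReal.ofReal_le_iff_le_toReal hW).1 (hmin t ht)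
  calc |gdiv ω g (σ t) (v t) i|
      ≤ ∑ k, |gdiv ω g (σ t) (v t) k| :=
        single_le_sum (fun k _ => abs_nonneg (gdiv ω g (σ t) (v t) k)) (mem_univ i)
    _ ≤ √2 * n * Cω * √(gInner ω g (σ t) (v t) (v t)) :=
        sum_abs_gdiv_le (hσ t ht) (hv t) hgnonneg hgsum hC
    _ ≤ √2 * n * Cω * √(W2sqV ω g ρ0 ρ1).toReal := by gcongr

/-- `‖div_ρ(v)‖_{ℓ¹} ≤ √2 n C_ω ‖v‖_ρ`, and hence an action-minimizing
constant-speed curve has `‖σ̇(t)‖_{ℓ∞} ≤ √2 n C_ω 𝒲(ρ⁰,ρ¹)`. -/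
theorem stmt7 {n : ℕ} (ω : Fin n → Fin n → ℝ) (g : ℝ → ℝ → ℝ)
    (hωsym : ∀ i j, ω i j = ω j i) (hωnonneg : ∀ i j, 0 ≤ ω i j)
    (hgsym : ∀ s t, g s t = g t s) (hgnonneg : ∀ s t, 0 ≤ g s t)
    (hgsum : ∀ s t : ℝ, 0 ≤ s → 0 ≤ t → g s t ≤ s + t)
    (Cω : ℝ) (hC : ∀ i j, Real.sqrt (ω i j) ≤ Cω) :
    (∀ (ρ : Fin n → ℝ) (v : Fin n → Fin n → ℝ), IsProb ρ → Skew v →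
      ∑ i, |gdiv ω g ρ v i|
        ≤ Real.sqrt 2 * n * Cω * Real.sqrt (gInner ω g ρ v v)) ∧
    (∀ (ρ0 ρ1 : Fin n → ℝ) (σ : ℝ → Fin n → ℝ) (v : ℝ → Fin n → Fin n → ℝ),
      IsProb ρ0 → IsProb ρ1 → W2sqV ω g ρ0 ρ1 ≠ ⊤ →
      (∀ t ∈ Set.Icc (0:ℝ) 1, IsProb (σ t)) → (∀ t, Skew (v t)) →
      (∀ t ∈ Set.Icc (0:ℝ) 1,
        HasDerivAt σ (fun i => -(gdiv ω g (σ t) (v t) i)) t) →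
      σ 0 = ρ0 → σ 1 = ρ1 →
      (∀ t ∈ Set.Icc (0:ℝ) 1,
        ENNReal.ofReal (gInner ω g (σ t) (v t) (v t)) ≤ W2sqV ω g ρ0 ρ1) →
      ∀ t ∈ Set.Icc (0:ℝ) 1, ∀ i,
        |gdiv ω g (σ t) (v t) i|
          ≤ Real.sqrt 2 * n * Cω * Real.sqrt (W2sqV ω g ρ0 ρ1).toReal) :=
  stmt7_general ω g hgnonneg hgsum Cω hC
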